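/- Let M be a K-paracontact metric manifold admitting a δ-almost Yamabe soliton with δ = λ and constant scalar curvature r, such that the potential vector field Z is a Jacobi field along ξ (i.e. ∇_ξ∇_ξ Z − R(Z,ξ)ξ = 0). Then r·(ξλ) = 0; hence either r = 0 or λ is constant along ξ. -/
import Mathlib


open scoped BigOperators

/-- Abstract geometric setup: `M` is the underlying point set and `V` plays the role of
the module of (smooth) vector fields over the commutative ring of functions `M → ℝ`.
`g` is a pseudo-Riemannian metric, `D X f` the directional derivative of the function
`f` along `X`, `bracket` the Lie bracket, `nabla` the Levi-Civita connection and
`r` the scalar curvature. -/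
structure GeomSetup (M : Type) (V : Type) [AddCommGroup V] [Module (M → ℝ) V] where
  g : V → V → M → ℝ
  D : V → (M → ℝ) → (M → ℝ)
  bracket : V → V → V
  nabla : V → V → V
  r : M → ℝ
  g_symm : ∀ X Y, g X Y = g Y X
  g_addl : ∀ X Y W, g (X + Y) W = g X W + g Y W
  g_smull : ∀ (f : M → ℝ) (X Y : V), g (f • X) Y = f * g X Y
  D_add : ∀ X f₁ f₂, D X (f₁ + f₂) = D X f₁ + D X f₂
  D_mul : ∀ X f₁ f₂, D X (f₁ * f₂) = f₁ * D X f₂ + f₂ * D X f₁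
  nabla_smul : ∀ (X : V) (f : M → ℝ) (Y : V), nabla X (f • Y) = D X f • Y + f • nabla X Y
  compat : ∀ X Y W, D X (g Y W) = g (nabla X Y) W + g Y (nabla X W)
  torsion_free : ∀ X Y, nabla X Y - nabla Y X = bracket X Y

namespace GeomSetup

variable {M V : Type} [AddCommGroup V] [Module (M → ℝ) V]

/-- The Lie derivative of the metric along `Z`:
`(L_Z g)(X,Y) = Z (g(X,Y)) - g([Z,X],Y) - g(X,[Z,Y])`. -/
def lieg (S : GeomSetup M V) (Z X Y : V) : M → ℝ :=
  S.D Z (S.g X Y) - S.g (S.bracket Z X) Y - S.g X (S.bracket Z Y)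

/-- The Lie derivative of a 1-form `ω` along `Z`:
`(L_Z ω)(X) = Z (ω(X)) - ω([Z,X])`. -/
def lieOneForm (S : GeomSetup M V) (Z : V) (ω : V → M → ℝ) (X : V) : M → ℝ :=
  S.D Z (ω X) - ω (S.bracket Z X)

/-- The Riemann curvature tensor `R(X,Y)W = ∇_X∇_Y W - ∇_Y∇_X W - ∇_{[X,Y]}W`. -/
def curv (S : GeomSetup M V) (X Y W : V) : V :=
  S.nabla X (S.nabla Y W) - S.nabla Y (S.nabla X W) - S.nabla (S.bracket X Y) W

/-- A δ-almost Yamabe soliton: `(δ/2)·L_Z g = (r − λ)·g`, with `δ` nowhere zero. -/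
def IsDeltaAlmostYamabeSoliton (S : GeomSetup M V) (Z : V) (lam dlt : M → ℝ) : Prop :=
  (∀ p, dlt p ≠ 0) ∧ ∀ X Y, dlt * S.lieg Z X Y = 2 * ((S.r - lam) * S.g X Y)

/-- A δ-almost gradient Yamabe soliton with potential function `u` whose gradient is the
vector field `gradu`: `δ·∇_X ∇u = (r − λ)·X` for all `X`, with `δ` nowhere zero. -/
def IsDeltaGradientYamabeSoliton (S : GeomSetup M V) (u : M → ℝ) (gradu : V)
    (lam dlt : M → ℝ) : Prop :=
  (∀ p, dlt p ≠ 0) ∧ (∀ X, S.g gradu X = S.D X u) ∧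
    ∀ X, dlt • S.nabla X gradu = (S.r - lam) • X

end GeomSetup

/-- A paracontact metric manifold `(M,φ,ξ,η,g)`, together with the tensor
`h = (1/2)·L_ξ φ`, on top of a geometric setup. -/
structure ParacontactSetup (M V : Type) [AddCommGroup V] [Module (M → ℝ) V]
    extends GeomSetup M V where
  phi : V → V
  xi : V
  eta : V → M → ℝ
  h : V → V
  eta_def : ∀ X, eta X = g X xi
  eta_xi : eta xi = 1
  phi_xi : phi xi = 0
  eta_phi : ∀ X, eta (phi X) = 0
  phi_sq : ∀ X, phi (phi X) = X - eta X • xi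
  g_phi : ∀ X Y, g (phi X) (phi Y) = -(g X Y) + eta X * eta Y
  /-- the paracontact condition `dη(X,Y) = g(X,φY)` (with
  `2·dη(X,Y) = X(η(Y)) − Y(η(X)) − η([X,Y])`). -/
  dEta_eq : ∀ X Y, D X (eta Y) - D Y (eta X) - eta (bracket X Y) = 2 * g X (phi Y)
  h_def : ∀ X, (2 : M → ℝ) • h X = bracket xi (phi X) - phi (bracket xi X)
  nabla_xi : ∀ X, nabla X xi = -(phi X) + phi (h X)

namespace ParacontactSetup

variable {M V : Type} [AddCommGroup V] [Module (M → ℝ) V]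

/-- The 3-form `η ∧ dη` (using `dη(X,Y) = g(X,φY)`). -/
def etaWedgeDEta (P : ParacontactSetup M V) (X Y W : V) : M → ℝ :=
  P.eta X * P.g Y (P.phi W) + P.eta Y * P.g W (P.phi X) + P.eta W * P.g X (P.phi Y)

/-- Nondegeneracy of the contact structure: `η ∧ dη ≠ 0` everywhere. -/
def ContactNondeg (P : ParacontactSetup M V) : Prop :=
  ∀ p : M, ∃ X Y W, P.etaWedgeDEta X Y W p ≠ 0

end ParacontactSetup

/-- On a K-paracontact manifold with a δ-almost Yamabe soliton with
`δ = λ`, constant scalar curvature and potential field `Z` a Jacobi field along `ξ`,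
one has `r·(ξλ) = 0`. -/
theorem stmt3 {M V : Type} [AddCommGroup V] [Module (M → ℝ) V]
    (P : ParacontactSetup M V)
    (hK : ∀ X, P.h X = 0)
    (hRxi : ∀ X, P.toGeomSetup.curv X P.xi P.xi = -X + P.eta X • P.xi)
    (Z : V) (lam dlt : M → ℝ)
    (hsol : P.toGeomSetup.IsDeltaAlmostYamabeSoliton Z lam dlt)
    (hdl : dlt = lam)
    (hrconst : ∀ X, P.D X P.r = 0)
    (hJacobi : P.nabla P.xi (P.nabla P.xi Z) - P.toGeomSetup.curv Z P.xi P.xi = 0) :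
    P.r * P.D P.xi lam = 0 := by
  classical
  -- basic metric lemmas
  have hg0 : ∀ W : V, P.g 0 W = 0 := by
    intro W
    have h := P.g_addl 0 0 W
    rw [add_zero] at h
    exact (left_eq_add.mp h)
  have hgneg : ∀ X W : V, P.g (-X) W = -(P.g X W) := by
    intro X W
    have h := P.g_addl X (-X) W
    rw [add_neg_cancel, hg0] at h
    exact eq_neg_of_add_eq_zero_right h.symm
  have hgsub : ∀ X Y W : V, P.g (X - Y) W = P.g X W - P.g Y W := by
    intro X Y W
    rw [sub_eq_add_neg, P.g_addl, hgneg, ← sub_eq_add_neg]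
  have hg0r : ∀ X : V, P.g X 0 = 0 := by
    intro X; rw [P.g_symm, hg0]
  -- derivative lemmas
  have hD1 : ∀ X : V, P.D X 1 = 0 := by
    intro X
    have h := P.D_mul X 1 1
    rw [mul_one, one_mul] at h
    exact (left_eq_add.mp h)
  have hDsub : ∀ (X : V) (f₁ f₂ : M → ℝ), P.D X (f₁ - f₂) = P.D X f₁ - P.D X f₂ := by
    intro X f₁ f₂
    have h := P.D_add X (f₁ - f₂) f₂
    rw [sub_add_cancel] at h
    exact eq_sub_of_add_eq h.symm
  have hDc : ∀ X : V, P.D X 2 = 0 := by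
    intro X
    rw [show (2 : M → ℝ) = 1 + 1 by norm_num, P.D_add, hD1, add_zero]
  -- phi 0 = 0
  have hphi0 : P.phi 0 = 0 := by
    have h := P.phi_sq P.xi
    rw [P.phi_xi, P.eta_xi, one_smul, sub_self] at h
    exact h
  -- nabla _ xi = -(phi _)
  have hnx : ∀ X : V, P.nabla X P.xi = -(P.phi X) := by
    intro X
    rw [P.nabla_xi, hK, hphi0, add_zero]
  have hnxx : P.nabla P.xi P.xi = 0 := by
    rw [hnx, P.phi_xi, neg_zero]
  have hgxx : P.g P.xi P.xi = 1 := by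
    rw [← P.eta_def, P.eta_xi]
  have hgphixi : ∀ X : V, P.g (P.phi X) P.xi = 0 := by
    intro X; rw [← P.eta_def, P.eta_phi]
  set f : M → ℝ := P.g (P.nabla P.xi Z) P.xi with hfdef
  -- bracket computation
  have hgbr : P.g (P.bracket Z P.xi) P.xi = -f := by
    have hb := P.torsion_free Z P.xi
    rw [← hb, hnx, hgsub, hgneg, hgphixi, neg_zero, zero_sub]
  -- Lie derivative at (xi, xi)
  have hlieg : P.toGeomSetup.lieg Z P.xi P.xi = f + f := by
    unfold GeomSetup.lieg
    rw [P.g_symm P.xi (P.bracket Z P.xi), hgbr, hgxx, hD1]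
    ring
  -- the soliton equation at (xi,xi)
  have E : lam * (f + f) = 2 * ((P.r - lam) * 1) := by
    have h := hsol.2 P.xi P.xi
    rw [hdl, hlieg, hgxx] at h
    exact h
  -- Jacobi field condition
  have hnn : P.nabla P.xi (P.nabla P.xi Z) = -Z + P.eta Z • P.xi := by
    have h := sub_eq_zero.mp hJacobi
    rw [hRxi] at h
    exact h
  -- D xi f = 0
  have hDf : P.D P.xi f = 0 := by
    have hc := P.compat P.xi (P.nabla P.xi Z) P.xi
    rw [hnxx, hg0r, add_zero, hnn, P.g_addl, hgneg, P.g_smull, hgxx, mul_one,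
      show P.g Z P.xi = P.eta Z from (P.eta_def Z).symm, neg_add_cancel] at hc
    exact hc
  -- differentiate the soliton equation along xi
  have hE2 : (f + f) * P.D P.xi lam = 2 * (0 - P.D P.xi lam) := by
    have h := congrArg (P.D P.xi) E
    rw [P.D_mul, P.D_add, hDf, add_zero, mul_zero, zero_add] at h
    rw [P.D_mul P.xi 2, hDc, mul_zero, add_zero] at h
    rw [P.D_mul, hD1, mul_zero, zero_add, one_mul] at h
    rw [hDsub, hrconst] at h
    exact h
  funext p
  have e1 := congrFun E p
  have e2 := congrFun hE2 p
  simp only [Pi.mul_apply, Pi.add_apply, Pi.sub_apply, Pi.one_apply, Pi.zero_apply,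
    Pi.ofNat_apply] at e1 e2 ⊢
  linear_combination (-(P.D P.xi lam p) / 2) * e1 + (lam p / 2) * e2
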